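/- Identification of the direct standardization parameter: Assume no unmeasured confounding. Let 𝒳' ⊆ 𝒳 be measurable with P(X ∈ 𝒳') > 0, fix a ∈ Fin m, and assume that π(a|X) > 0 holds P-a.s. on the event {X ∈ 𝒳'}. Then E[f(X, a, U) | X ∈ 𝒳'] = E[μ(a, X) | X ∈ 𝒳']; that is, the mean counterfactual success rate had all attempts in the reference population been assigned to player a equals the conditional mean of the outcome regression μ(a, X). -/

import Mathlib

/-!
Write `𝒢 = σ(X)`, `S = {A = a}` and `g = f(X, a, U)`. Conditional independence of `A` and `U`
given `𝒢` upgrades to `P(S | 𝒢 ∨ σ(U)) = P(S | 𝒢)`: both sides have the same integral over each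
set `s ∩ t` with `s ∈ 𝒢`, `t ∈ σ(U)`, and these sets form a π-system generating `𝒢 ∨ σ(U)`.
Since `g` is `𝒢 ∨ σ(U)`-measurable, the tower property and pulling out known factors give
`E[1_S g | 𝒢] = π(a | X) E[g | 𝒢]`, so the outcome regression satisfies
`μ(a, X) π(a | X) = π(a | X) E[g | 𝒢]`. Positivity cancels `π(a | X)` on the `𝒢`-measurable event
`{X ∈ 𝒳'}`, and integrating `E[g | 𝒢]` over that event gives back the integral of `g`.
-/

open MeasureTheory ProbabilityTheory Set

lemma IsPiSystem.image2_inter {α : Type*} {C D : Set (Set α)} (hC : IsPiSystem C)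
    (hD : IsPiSystem D) : IsPiSystem (image2 (· ∩ ·) C D) := by
  rintro _ ⟨s₁, hs₁, t₁, ht₁, rfl⟩ _ ⟨s₂, hs₂, t₂, ht₂, rfl⟩ hne
  rw [inter_inter_inter_comm] at hne ⊢
  exact ⟨s₁ ∩ s₂, hC _ hs₁ _ hs₂ hne.left, t₁ ∩ t₂, hD _ ht₁ _ ht₂ hne.right, rfl⟩

lemma MeasurableSpace.sup_eq_generateFrom_image2_inter {α : Type*} (m₁ m₂ : MeasurableSpace α) :
    m₁ ⊔ m₂ =
      generateFrom (image2 (· ∩ ·) {s | MeasurableSet[m₁] s} {t | MeasurableSet[m₂] t}) := by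
  refine le_antisymm (sup_le (fun s hs => ?_) fun t ht => ?_) (generateFrom_le ?_)
  · exact measurableSet_generateFrom ⟨s, hs, univ, .univ, inter_univ s⟩
  · exact measurableSet_generateFrom ⟨univ, .univ, t, ht, univ_inter t⟩
  · rintro _ ⟨s, hs, t, ht, rfl⟩
    exact (le_sup_left (b := m₂) s hs).inter (le_sup_right (a := m₁) t ht)

section

variable {Ω : Type*} {m m₁ m₂ mΩ : MeasurableSpace Ω} {μ : Measure Ω}

theorem MeasureTheory.setIntegral_eq_of_isPiSystem {f g : Ω → ℝ} {p : Set (Set Ω)}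
    (hm : m ≤ mΩ) (h_eq : m = MeasurableSpace.generateFrom p) (h_pi : IsPiSystem p)
    (hf : Integrable f μ) (hg : Integrable g μ) (h_univ : ∫ ω, f ω ∂μ = ∫ ω, g ω ∂μ)
    (basic : ∀ t ∈ p, ∫ ω in t, f ω ∂μ = ∫ ω in t, g ω ∂μ) {t : Set Ω}
    (ht : MeasurableSet[m] t) : ∫ ω in t, f ω ∂μ = ∫ ω in t, g ω ∂μ := by
  induction t, ht using MeasurableSpace.induction_on_inter h_eq h_pi with
  | empty => simp
  | basic t ht => exact basic t ht
  | compl t ht ih =>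
    rw [setIntegral_compl (hm t ht) hf, setIntegral_compl (hm t ht) hg, ih, h_univ]
  | iUnion t hdisj ht ih =>
    rw [integral_iUnion (fun i => hm _ (ht i)) hdisj hf.integrableOn,
      integral_iUnion (fun i => hm _ (ht i)) hdisj hg.integrableOn]
    exact tsum_congr ih

lemma MeasureTheory.setIntegral_eq_of_ae_mem_eq_condExp (hm : m ≤ mΩ)
    [SigmaFinite (μ.trim hm)] {g h : Ω → ℝ} (hg : Integrable g μ) {E : Set Ω}
    (hE : MeasurableSet[m] E) (hgh : ∀ᵐ ω ∂μ, ω ∈ E → h ω = μ[g | m] ω) :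
    ∫ ω in E, g ω ∂μ = ∫ ω in E, h ω ∂μ := by
  rw [← setIntegral_condExp hm hg hE]
  exact setIntegral_congr_ae (hm E hE) (hgh.mono fun ω hω hωE => (hω hωE).symm)

lemma ProbabilityTheory.ae_abs_condExp_indicator_le_one {S : Set Ω} :
    ∀ᵐ ω ∂μ, |(μ⟦S | m⟧) ω| ≤ 1 :=
  ae_bdd_abs_condExp_of_ae_bdd_abs (.of_forall fun ω => by
    by_cases h : ω ∈ S <;> simp [h])

variable [StandardBorelSpace Ω] [IsFiniteMeasure μ]

theorem ProbabilityTheory.condExp_sup_ae_eq_of_condIndep (hm : m ≤ mΩ) (hm₁ : m₁ ≤ mΩ)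
    (hm₂ : m₂ ≤ mΩ) (h : CondIndep m m₁ m₂ hm μ) {S : Set Ω} (hS : MeasurableSet[m₁] S) :
    μ⟦S | m ⊔ m₂⟧ =ᵐ[μ] μ⟦S | m⟧ := by
  have hm' : m ⊔ m₂ ≤ mΩ := sup_le hm hm₂
  have h1S : Integrable (S.indicator fun _ => (1 : ℝ)) μ :=
    (integrable_const (1 : ℝ)).indicator (hm₁ S hS)
  have hφ : StronglyMeasurable[m ⊔ m₂] (μ⟦S | m⟧) := stronglyMeasurable_condExp.mono le_sup_left
  refine (ae_eq_condExp_of_forall_setIntegral_eq hm' h1S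
    (fun _ _ _ => integrable_condExp.integrableOn) (fun D hD _ => ?_)
    hφ.aestronglyMeasurable).symm
  refine setIntegral_eq_of_isPiSystem hm' (MeasurableSpace.sup_eq_generateFrom_image2_inter m m₂)
    ((@MeasurableSpace.isPiSystem_measurableSet Ω m).image2_inter
      (@MeasurableSpace.isPiSystem_measurableSet Ω m₂))
    integrable_condExp h1S (integral_condExp hm) ?_ hD
  rintro _ ⟨s, hs, t, ht, rfl⟩
  have h1t : Integrable (t.indicator fun _ => (1 : ℝ)) μ :=
    (integrable_const (1 : ℝ)).indicator (hm₂ t ht)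
  calc ∫ ω in s ∩ t, (μ⟦S | m⟧) ω ∂μ
      = ∫ ω in s, (μ⟦S | m⟧ * t.indicator fun _ => (1 : ℝ)) ω ∂μ := by
        rw [← setIntegral_indicator (hm₂ t ht)]
        congr with ω
        by_cases hω : ω ∈ t <;> simp [hω]
    _ = ∫ ω in s, (μ[μ⟦S | m⟧ * t.indicator fun _ => (1 : ℝ) | m]) ω ∂μ :=
        (setIntegral_condExp hm (h1t.bdd_mul integrable_condExp.aestronglyMeasurable
          ae_abs_condExp_indicator_le_one) hs).symm
    _ = ∫ ω in s, (μ⟦S | m⟧ * μ⟦t | m⟧) ω ∂μ :=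
        setIntegral_congr_ae (hm s hs) ((condExp_stronglyMeasurable_mul_of_bound hm
          stronglyMeasurable_condExp h1t 1 ae_abs_condExp_indicator_le_one).mono
            fun ω hω _ => hω)
    _ = ∫ ω in s, (μ⟦S ∩ t | m⟧) ω ∂μ :=
        setIntegral_congr_ae (hm s hs) ((((condIndep_iff m m₁ m₂ hm hm₁ hm₂ μ).1 h S t hS ht)).mono
          fun ω hω _ => hω.symm)
    _ = ∫ ω in s ∩ t, S.indicator (fun _ => (1 : ℝ)) ω ∂μ := by
        rw [setIntegral_condExp hm ((integrable_const (1 : ℝ)).indicator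
            ((hm₁ S hS).inter (hm₂ t ht))) hs,
          ← setIntegral_indicator (hm₂ t ht), indicator_indicator, inter_comm]

theorem ProbabilityTheory.condExp_indicator_mul_ae_eq_of_condIndep (hm : m ≤ mΩ)
    (hm₁ : m₁ ≤ mΩ) (hm₂ : m₂ ≤ mΩ) (h : CondIndep m m₁ m₂ hm μ) {S : Set Ω}
    (hS : MeasurableSet[m₁] S) {g : Ω → ℝ} (hg : StronglyMeasurable[m ⊔ m₂] g)
    (hgi : Integrable g μ) :
    μ[S.indicator (fun _ => (1 : ℝ)) * g | m] =ᵐ[μ] μ⟦S | m⟧ * μ[g | m] := by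
  have h1S : Integrable (S.indicator fun _ => (1 : ℝ)) μ :=
    (integrable_const (1 : ℝ)).indicator (hm₁ S hS)
  have h1Sg : Integrable (S.indicator (fun _ => (1 : ℝ)) * g) μ :=
    hgi.bdd_mul (c := 1) h1S.aestronglyMeasurable
      (.of_forall fun ω => by by_cases hω : ω ∈ S <;> simp [hω])
  calc μ[S.indicator (fun _ => (1 : ℝ)) * g | m]
      =ᵐ[μ] μ[μ[S.indicator (fun _ => (1 : ℝ)) * g | m ⊔ m₂] | m] :=
        (condExp_condExp_of_le le_sup_left (sup_le hm hm₂)).symm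
    _ =ᵐ[μ] μ[μ⟦S | m ⊔ m₂⟧ * g | m] :=
        condExp_congr_ae (condExp_mul_of_stronglyMeasurable_right hg h1Sg h1S)
    _ =ᵐ[μ] μ[μ⟦S | m⟧ * g | m] :=
        condExp_congr_ae ((condExp_sup_ae_eq_of_condIndep hm hm₁ hm₂ h hS).mul .rfl)
    _ =ᵐ[μ] μ⟦S | m⟧ * μ[g | m] :=
        condExp_stronglyMeasurable_mul_of_bound hm stronglyMeasurable_condExp hgi 1
          ae_abs_condExp_indicator_le_one

end

theorem identification_direct_standardization_general
    {Ω 𝒳 𝒰 : Type*} [MeasurableSpace Ω] [StandardBorelSpace Ω]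
    [MeasurableSpace 𝒳]
    [MeasurableSpace 𝒰]
    (P : Measure Ω) [IsProbabilityMeasure P]
    (m : ℕ)
    (X : Ω → 𝒳) (U : Ω → 𝒰) (A : Ω → Fin m)
    (hX : Measurable X) (hU : Measurable U) (hA : Measurable A)
    (f : 𝒳 → Fin m → 𝒰 → ℝ)
    (hf : Measurable fun p : 𝒳 × Fin m × 𝒰 => f p.1 p.2.1 p.2.2)
    (C : ℝ) (hfbdd : ∀ x b u, |f x b u| ≤ C)
    -- propensity scores: π(b|X) is a version of E[1{A=b} | σ(X)]
    (π : Fin m → 𝒳 → ℝ)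
    (hπ : ∀ b, (fun ω => π b (X ω)) =ᵐ[P]
      P[fun ω => (if A ω = b then (1 : ℝ) else 0) | MeasurableSpace.comap X inferInstance])
    -- outcome regression: μ(b,X)·π(b|X) is a version of E[1{A=b}·Y | σ(X)]
    (μreg : Fin m → 𝒳 → ℝ)
    (hμ : ∀ b, (fun ω => μreg b (X ω) * π b (X ω)) =ᵐ[P]
      P[fun ω => (if A ω = b then (1 : ℝ) else 0) * f (X ω) (A ω) (U ω) |
        MeasurableSpace.comap X inferInstance])
    -- no unmeasured confounding: A ⫫ U | σ(X)
    (hNUC : CondIndepFun (MeasurableSpace.comap X inferInstance) hX.comap_le A U P)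
    -- reference population and focal player
    (𝒳' : Set 𝒳) (h𝒳' : MeasurableSet 𝒳') (a : Fin m)
    (E : Set Ω) (hE : E = {ω | X ω ∈ 𝒳'})
    -- positivity on the reference population
    (hpos : ∀ᵐ ω ∂P, X ω ∈ 𝒳' → 0 < π a (X ω)) :
    (∫ ω in E, f (X ω) a (U ω) ∂P) / (P E).toReal
      = (∫ ω in E, μreg a (X ω) ∂P) / (P E).toReal := by
  subst hE
  set 𝒢 := MeasurableSpace.comap X inferInstance
  set S := A ⁻¹' {a}
  set g := fun ω => f (X ω) a (U ω)
  have hI : (fun ω => if A ω = a then (1 : ℝ) else 0) = S.indicator fun _ => 1 := by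
    ext ω; by_cases h : A ω = a <;> simp [h, S]
  have hY : (fun ω => (if A ω = a then (1 : ℝ) else 0) * f (X ω) (A ω) (U ω))
      = S.indicator (fun _ => 1) * g := by
    ext ω; by_cases h : A ω = a <;> simp [h, S, g]
  have hg : StronglyMeasurable[𝒢 ⊔ MeasurableSpace.comap U inferInstance] g :=
    (hf.comp ((comap_measurable X).mono le_sup_left le_rfl |>.prodMk
      (measurable_const.prodMk ((comap_measurable U).mono le_sup_right le_rfl)))).stronglyMeasurable
  have hgi : Integrable g P :=
    .of_bound (hg.mono (sup_le hX.comap_le hU.comap_le)).aestronglyMeasurable C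
      (.of_forall fun ω => hfbdd _ _ _)
  have hfactor : P[S.indicator (fun _ => 1) * g | 𝒢] =ᵐ[P] P⟦S | 𝒢⟧ * P[g | 𝒢] :=
    condExp_indicator_mul_ae_eq_of_condIndep hX.comap_le hA.comap_le hU.comap_le
      ((condIndepFun_iff_condIndep _ _ A U P).1 hNUC) ⟨{a}, measurableSet_singleton a, rfl⟩ hg hgi
  have hreg : ∀ᵐ ω ∂P, X ω ∈ 𝒳' → μreg a (X ω) = P[g | 𝒢] ω := by
    filter_upwards [hμ a, hπ a, hfactor, hpos] with ω hμω hπω hfactorω hposω hω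
    rw [hY] at hμω
    rw [hI] at hπω
    refine mul_right_cancel₀ (hposω hω).ne' ?_
    rw [hμω, hfactorω, Pi.mul_apply, ← hπω, mul_comm]
  congr 1
  exact setIntegral_eq_of_ae_mem_eq_condExp hX.comap_le hgi ⟨𝒳', h𝒳', rfl⟩ hreg

/-- Identification of the direct standardization parameter. -/
theorem identification_direct_standardization
    {Ω 𝒳 𝒰 : Type*} [MeasurableSpace Ω] [StandardBorelSpace Ω]
    [MeasurableSpace 𝒳] [StandardBorelSpace 𝒳]
    [MeasurableSpace 𝒰] [StandardBorelSpace 𝒰]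
    (P : Measure Ω) [IsProbabilityMeasure P]
    (m : ℕ) (hm : 1 ≤ m)
    (X : Ω → 𝒳) (U : Ω → 𝒰) (A : Ω → Fin m)
    (hX : Measurable X) (hU : Measurable U) (hA : Measurable A)
    (f : 𝒳 → Fin m → 𝒰 → ℝ)
    (hf : Measurable fun p : 𝒳 × Fin m × 𝒰 => f p.1 p.2.1 p.2.2)
    (C : ℝ) (hfbdd : ∀ x b u, |f x b u| ≤ C)
    -- propensity scores: π(b|X) is a version of E[1{A=b} | σ(X)]
    (π : Fin m → 𝒳 → ℝ) (hπmeas : ∀ b, Measurable (π b))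
    (hπ01 : ∀ b x, 0 ≤ π b x ∧ π b x ≤ 1)
    (hπ : ∀ b, (fun ω => π b (X ω)) =ᵐ[P]
      P[fun ω => (if A ω = b then (1 : ℝ) else 0) | MeasurableSpace.comap X inferInstance])
    -- outcome regression: μ(b,X)·π(b|X) is a version of E[1{A=b}·Y | σ(X)]
    (μreg : Fin m → 𝒳 → ℝ) (hμmeas : ∀ b, Measurable (μreg b))
    (Cμ : ℝ) (hμbdd : ∀ b x, |μreg b x| ≤ Cμ)
    (hμ : ∀ b, (fun ω => μreg b (X ω) * π b (X ω)) =ᵐ[P]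
      P[fun ω => (if A ω = b then (1 : ℝ) else 0) * f (X ω) (A ω) (U ω) |
        MeasurableSpace.comap X inferInstance])
    -- no unmeasured confounding: A ⫫ U | σ(X)
    (hNUC : CondIndepFun (MeasurableSpace.comap X inferInstance) hX.comap_le A U P)
    -- reference population and focal player
    (𝒳' : Set 𝒳) (h𝒳' : MeasurableSet 𝒳') (a : Fin m)
    (E : Set Ω) (hE : E = {ω | X ω ∈ 𝒳'})
    (hPE : 0 < P E)
    -- positivity on the reference population
    (hpos : ∀ᵐ ω ∂P, X ω ∈ 𝒳' → 0 < π a (X ω)) :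
    (∫ ω in E, f (X ω) a (U ω) ∂P) / (P E).toReal
      = (∫ ω in E, μreg a (X ω) ∂P) / (P E).toReal :=
  identification_direct_standardization_general P m X U A hX hU hA f hf C hfbdd π hπ μreg hμ hNUC 𝒳'
    h𝒳' a E hE hpos
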